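/- Let K₁, K₂, N be closed subspaces of a complex Hilbert space E such that P_{K₁} commutes with P_N and P_{K₂} commutes with P_N. Then (K₁ ∗ K₂) ⊓ N = ((K₁ ⊓ N) ∗ (K₂ ⊓ N)) ⊓ N. -/

import Mathlib

variable {E : Type*} [NormedAddCommGroup E] [InnerProductSpace ℂ E] [CompleteSpace E]

/-- Orthogonal projection onto (the topological closure of) a submodule, as a
continuous linear operator on `E`. For a closed subspace `K` this is the
orthogonal projection `P_K` onto `K` itself. -/
noncomputable def proj (K : Submodule ℂ E) : E →L[ℂ] E :=
  K.topologicalClosure.subtypeL.comp (K.topologicalClosure.orthogonalProjectionOnto)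


/-- The Sasaki arrow `K ⇒ M`. -/
noncomputable def sasaki (K M : Submodule ℂ E) : Submodule ℂ E :=
  Kᗮ ⊔ (K ⊓ M)


/-- The Sasaki projection `K ∗ M := (K ⇒ Mᗮ)ᗮ`. -/
noncomputable def sproj (K M : Submodule ℂ E) : Submodule ℂ E :=
  (sasaki K Mᗮ)ᗮ

/-!
Since `P_N` commutes with `P_{K₁}` and `P_{K₂}`, it maps `K₁ ⊓ K₂ᗮ` into
`(K₁ ⊓ N) ⊓ (K₂ ⊓ N)ᗮ`, and this subspace lies in `K₁ ⊓ K₂ᗮ` again. As `P_N` is self-adjoint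
and fixes `N`, a vector of `N` is therefore orthogonal to `K₁ ⊓ K₂ᗮ` if and only if it is
orthogonal to `(K₁ ⊓ N) ⊓ (K₂ ⊓ N)ᗮ`. Together with `K ∗ M = K ⊓ (K ⊓ Mᗮ)ᗮ` for closed `K`,
this is the claim.
-/

open Set Submodule

section Commuting

variable {𝕜 F : Type*} [RCLike 𝕜] [NormedAddCommGroup F] [InnerProductSpace 𝕜 F]
  {K N : Submodule 𝕜 F} [K.HasOrthogonalProjection] [N.HasOrthogonalProjection]

theorem Submodule.inf_orthogonal_le_orthogonal_of_mapsTo {A B : Submodule 𝕜 F}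
    (h : MapsTo N.starProjection A B) : N ⊓ Bᗮ ≤ Aᗮ := by
  rintro x ⟨hxN, hxB⟩ y hy
  rw [← (starProjection_eq_self_iff (K := N)).mpr hxN, ← inner_starProjection_left_eq_right]
  exact hxB _ (h hy)

theorem Submodule.mapsTo_starProjection_of_commute
    (h : Commute K.starProjection N.starProjection) : MapsTo N.starProjection K K := by
  intro x hx
  rw [SetLike.mem_coe, ← starProjection_eq_self_iff (K := K)]
  exact (DFunLike.congr_fun h.eq x).trans
    (congrArg N.starProjection (starProjection_eq_self_iff.mpr hx))

theorem Commute.starProjection_orthogonal_left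
    (h : Commute K.starProjection N.starProjection) :
    Commute Kᗮ.starProjection N.starProjection := by
  rw [starProjection_orthogonal']
  exact (Commute.one_left _).sub_left h

theorem Submodule.inf_orthogonal_inf_le_orthogonal_of_commute
    (h : Commute K.starProjection N.starProjection) : N ⊓ (K ⊓ N)ᗮ ≤ Kᗮ :=
  inf_orthogonal_le_orthogonal_of_mapsTo fun _ hx =>
    ⟨mapsTo_starProjection_of_commute h hx, starProjection_apply_mem N _⟩

theorem Submodule.inf_orthogonal_inf_orthogonal_eq_of_commute {K₁ K₂ : Submodule 𝕜 F}
    [K₁.HasOrthogonalProjection] [K₂.HasOrthogonalProjection]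
    (h₁ : Commute K₁.starProjection N.starProjection)
    (h₂ : Commute K₂.starProjection N.starProjection) :
    N ⊓ (K₁ ⊓ K₂ᗮ)ᗮ = N ⊓ (K₁ ⊓ N ⊓ (K₂ ⊓ N)ᗮ)ᗮ := by
  refine le_antisymm (inf_le_inf_left _ (orthogonal_le ?_))
    (le_inf inf_le_left (inf_orthogonal_le_orthogonal_of_mapsTo ?_))
  · calc K₁ ⊓ N ⊓ (K₂ ⊓ N)ᗮ = K₁ ⊓ (N ⊓ (K₂ ⊓ N)ᗮ) := inf_assoc _ _ _
      _ ≤ K₁ ⊓ K₂ᗮ := inf_le_inf_left _ (inf_orthogonal_inf_le_orthogonal_of_commute h₂)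
  · rintro y ⟨hy₁, hy₂⟩
    exact ⟨⟨mapsTo_starProjection_of_commute h₁ hy₁, starProjection_apply_mem N _⟩,
      orthogonal_le inf_le_left
        (mapsTo_starProjection_of_commute h₂.starProjection_orthogonal_left hy₂)⟩

end Commuting

theorem proj_eq_starProjection (K : Submodule ℂ E) [CompleteSpace K] :
    proj K = K.starProjection := by
  have hK : K.topologicalClosure = K :=
    (completeSpace_coe_iff_isComplete.mp ‹_›).isClosed.submodule_topologicalClosure_eq
  change K.topologicalClosure.starProjection = _
  congr

theorem sproj_eq_inf_orthogonal {K : Submodule ℂ E} (hK : IsClosed (K : Set E))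
    (M : Submodule ℂ E) : sproj K M = K ⊓ (K ⊓ Mᗮ)ᗮ := by
  rw [sproj, sasaki, ← inf_orthogonal, orthogonal_orthogonal_eq_closure,
    hK.submodule_topologicalClosure_eq]

theorem stmt14 (K₁ K₂ N : Submodule ℂ E)
    (hK₁ : IsClosed (K₁ : Set E)) (hK₂ : IsClosed (K₂ : Set E)) (hN : IsClosed (N : Set E))
    (h₁ : proj K₁ ∘L proj N = proj N ∘L proj K₁)
    (h₂ : proj K₂ ∘L proj N = proj N ∘L proj K₂) :
    sproj K₁ K₂ ⊓ N = sproj (K₁ ⊓ N) (K₂ ⊓ N) ⊓ N := by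
  have := hK₁.completeSpace_coe
  have := hK₂.completeSpace_coe
  have := hN.completeSpace_coe
  simp only [proj_eq_starProjection] at h₁ h₂
  rw [sproj_eq_inf_orthogonal hK₁, sproj_eq_inf_orthogonal (hK₁.inter hN), inf_assoc,
    inf_comm _ N, inf_orthogonal_inf_orthogonal_eq_of_commute h₁ h₂, inf_right_comm _ _ N,
    inf_assoc K₁ N N, inf_idem]
  exact (inf_assoc _ _ _).symm
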